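/- arXiv:2208.13880 — 6 statements merged into one kernel-verified Lean document; each statement's English description precedes it below -/
import Mathlib

section
/- Let ε > 0, q ∈ [0,1], and let X be a real symmetric positive semidefinite n×n matrix all of whose diagonal entries equal 1. Set C = 2ε(1+ε^q) and G = C·(XXᵀ + εI)⁻²·X. If 0 ≤ α ≤ ε/(4(1+ε^q)), then the matrix Y obtained from X − 2αG by replacing every diagonal entry with 1 is positive semidefinite. -/
open Matrix

/-- **Theorem 3.1** (singular-value rank surrogate, gradient step with diagonal reset).
Let `ε > 0`, `q ∈ [0,1]`, and let `X` be a real symmetric PSD `n×n` matrix with unit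
diagonal.  Set `C = 2ε(1+ε^q)` and `G = C • ((XXᵀ + εI)⁻²) * X`.  If
`0 ≤ α ≤ ε / (4(1+ε^q))`, then the matrix obtained from `X - 2αG` by resetting every
diagonal entry to `1` is positive semidefinite. -/
theorem gradient_step_diag_reset_psd_singular_value_relaxation
    {n : ℕ} (ε q α : ℝ) (hε : 0 < ε) (hq0 : 0 ≤ q) (hq1 : q ≤ 1)
    (X : Matrix (Fin n) (Fin n) ℝ) (hX : X.PosSemidef)
    (hdiag : ∀ i, X i i = 1)
    (hα0 : 0 ≤ α) (hα : α ≤ ε / (4 * (1 + ε ^ q))) :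
    Matrix.PosSemidef (Matrix.of fun i j : Fin n =>
      if i = j then (1 : ℝ)
      else (X - (2 * α) •
        ((2 * ε * (1 + ε ^ q)) • ((((X * Xᵀ + ε • 1)⁻¹) ^ 2) * X))) i j) := by
  classical
  have hH : X.IsHermitian := hX.1
  set U : Matrix (Fin n) (Fin n) ℝ := (hH.eigenvectorUnitary : Matrix (Fin n) (Fin n) ℝ) with hUdef
  have hU1 : Uᴴ * U = 1 := by
    have := mem_unitaryGroup_iff'.mp hH.eigenvectorUnitary.2
    simpa [Matrix.star_eq_conjTranspose] using this
  have hU2 : U * Uᴴ = 1 := by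
    have := mem_unitaryGroup_iff.mp hH.eigenvectorUnitary.2
    simpa [Matrix.star_eq_conjTranspose] using this
  set e := hH.eigenvalues with hedef
  have he : ∀ i, 0 ≤ e i := hX.eigenvalues_nonneg
  have hspec : X = U * diagonal e * Uᴴ := by
    have := hH.spectral_theorem
    simpa [Matrix.star_eq_conjTranspose] using this
  -- conjugation calculus
  have key : ∀ d d' : Fin n → ℝ,
      (U * diagonal d * Uᴴ) * (U * diagonal d' * Uᴴ) = U * diagonal (fun i => d i * d' i) * Uᴴ := by
    intro d d'
    calc (U * diagonal d * Uᴴ) * (U * diagonal d' * Uᴴ)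
        = U * diagonal d * (Uᴴ * U) * diagonal d' * Uᴴ := by
          simp only [Matrix.mul_assoc]
      _ = U * (diagonal d * diagonal d') * Uᴴ := by
          rw [hU1]; simp only [Matrix.mul_one, Matrix.mul_assoc]
      _ = U * diagonal (fun i => d i * d' i) * Uᴴ := by
          rw [diagonal_mul_diagonal]
  have hXpos : ∀ i, 0 < e i * e i + ε := fun i => by nlinarith [he i]
  -- positivity facts
  have hεq : 0 < 1 + ε ^ q := by positivity
  -- A = X*Xᵀ + ε•1
  have hXt : Xᵀ = X := by
    rw [← Matrix.conjTranspose_eq_transpose_of_trivial]; exact hH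
  have hone : (1 : Matrix (Fin n) (Fin n) ℝ) = U * diagonal (fun _ => (1:ℝ)) * Uᴴ := by
    rw [diagonal_one, Matrix.mul_one, hU2]
  have hsmul : ∀ (c : ℝ) (d : Fin n → ℝ),
      c • (U * diagonal d * Uᴴ) = U * diagonal (fun i => c * d i) * Uᴴ := by
    intro c d
    have hd : diagonal (fun i => c * d i) = c • diagonal d := by
      rw [← diagonal_smul]; rfl
    rw [hd, Matrix.mul_smul, Matrix.smul_mul]
  have hA : X * Xᵀ + ε • 1 = U * diagonal (fun i => e i * e i + ε) * Uᴴ := by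
    rw [hXt, hspec, key, hone, hsmul, ← Matrix.add_mul, ← Matrix.mul_add, ← diagonal_add]
    simp
  have hAinv : (X * Xᵀ + ε • 1)⁻¹ = U * diagonal (fun i => (e i * e i + ε)⁻¹) * Uᴴ := by
    rw [hA]
    refine Matrix.inv_eq_right_inv ?_
    rw [key]
    have : (fun i => (e i * e i + ε) * (e i * e i + ε)⁻¹) = fun _ => (1:ℝ) := by
      funext i; exact mul_inv_cancel₀ (hXpos i).ne'
    rw [this, ← hone]
  set m : Fin n → ℝ := fun i =>
    e i - 2 * α * (2 * ε * (1 + ε ^ q) * (((e i * e i + ε)⁻¹) * ((e i * e i + ε)⁻¹) * e i))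
    with hmdef
  set M := X - (2 * α) •
      ((2 * ε * (1 + ε ^ q)) • ((((X * Xᵀ + ε • 1)⁻¹) ^ 2) * X)) with hMdef
  have hM : M = U * diagonal m * Uᴴ := by
    rw [hMdef, pow_two, hAinv, hspec, key, key, hsmul, hsmul, ← Matrix.sub_mul,
      ← Matrix.mul_sub, ← diagonal_sub]
  -- eigenvalue bounds
  have hαε : 2 * α * (2 * ε * (1 + ε ^ q)) ≤ ε ^ 2 := by
    rw [le_div_iff₀ (by positivity)] at hα
    nlinarith
  have hm0 : ∀ i, 0 ≤ m i := by
    intro i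
    have hs := hXpos i
    have hsε : ε ≤ e i * e i + ε := by nlinarith [he i]
    have hinv : (e i * e i + ε)⁻¹ ≤ ε⁻¹ := by
      exact inv_anti₀ hε hsε
    have hinvpos : 0 < (e i * e i + ε)⁻¹ := inv_pos.mpr hs
    have h1 : 2 * α * (2 * ε * (1 + ε ^ q)) * ((e i * e i + ε)⁻¹ * (e i * e i + ε)⁻¹) ≤ 1 := by
      have h2 : (e i * e i + ε)⁻¹ * (e i * e i + ε)⁻¹ ≤ ε⁻¹ * ε⁻¹ := by
        exact mul_le_mul hinv hinv (le_of_lt hinvpos) (le_of_lt (inv_pos.mpr hε))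
      have h3 : ε ^ 2 * (ε⁻¹ * ε⁻¹) = 1 := by
        rw [pow_two]; field_simp
      nlinarith [mul_le_mul hαε h2 (by positivity) (sq_nonneg ε)]
    have := he i
    rw [hmdef]
    simp only
    nlinarith
  have hmle : ∀ i, m i ≤ e i := by
    intro i
    have hinvpos : 0 < (e i * e i + ε)⁻¹ := inv_pos.mpr (hXpos i)
    have : 0 ≤ 2 * α * (2 * ε * (1 + ε ^ q) * ((e i * e i + ε)⁻¹ * (e i * e i + ε)⁻¹ * e i)) := by
      have := he i; positivity
    rw [hmdef]; simp only; linarith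
  -- diagonal entries of M
  have hMdiag : ∀ i, M i i ≤ 1 := by
    intro i
    have hMe : M i i = ∑ j, U i j * m j * U i j := by
      rw [hM, Matrix.mul_apply]
      refine Finset.sum_congr rfl fun j _ => ?_
      rw [Matrix.mul_diagonal, Matrix.conjTranspose_apply, star_trivial]
    have hXe : X i i = ∑ j, U i j * e j * U i j := by
      conv_lhs => rw [hspec]
      rw [Matrix.mul_apply]
      refine Finset.sum_congr rfl fun j _ => ?_
      rw [Matrix.mul_diagonal, Matrix.conjTranspose_apply, star_trivial]
    have : M i i ≤ X i i := by
      rw [hMe, hXe]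
      refine Finset.sum_le_sum fun j _ => ?_
      have h1 : U i j * m j * U i j = m j * (U i j * U i j) := by ring
      have h2 : U i j * e j * U i j = e j * (U i j * U i j) := by ring
      rw [h1, h2]
      exact mul_le_mul_of_nonneg_right (hmle j) (mul_self_nonneg _)
    rw [hdiag i] at this; exact this
  -- decompose Y
  have hY : (Matrix.of fun i j : Fin n =>
      if i = j then (1 : ℝ) else M i j)
      = M + diagonal (fun i => 1 - M i i) := by
    ext i j
    by_cases h : i = j
    · subst h; simp
    · simp [h, Matrix.diagonal_apply_ne _ h]
  have hMpsd : M.PosSemidef := by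
    rw [hM]
    exact (posSemidef_diagonal_iff.mpr hm0).mul_mul_conjTranspose_same U
  have hDpsd : (diagonal (fun i => 1 - M i i)).PosSemidef :=
    posSemidef_diagonal_iff.mpr fun i => by linarith [hMdiag i]
  rw [hY]
  exact hMpsd.add hDpsd
end

section
/- Let ε > 0, q ∈ [0,1], and let X be a real symmetric positive semidefinite n×n matrix. Set C = 2ε(1+ε^q). If 0 ≤ α ≤ ε/(4(1+ε^q)), then the matrix X − 2αC·(XXᵀ + εI)⁻²·X is positive semidefinite. -/
/-!
With `M = X * X + ε • 1`, which commutes with `X`, the step equals `M⁻¹ (M X M - c X) M⁻¹` with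
`c = 2αC ≤ ε²`, and `M X M - c X = X⁵ + 2ε X³ + (ε² - c) X` is positive semidefinite.
-/

open Matrix
open scoped ComplexOrder

namespace Matrix

variable {n R : Type*} [Fintype n] [DecidableEq n]

theorem sub_smul_inv_sq_mul_eq_inv_mul_mul_inv [CommRing R] {M X : Matrix n n R} (hM : IsUnit M)
    (hXM : Commute X M) (c : R) :
    X - c • (M⁻¹ ^ 2 * X) = M⁻¹ * (M * X * M - c • X) * M⁻¹ := by
  obtain ⟨u, rfl⟩ := hM
  have hXu : Commute X ↑u⁻¹ := hXM.units_inv_right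
  rw [← coe_units_inv, mul_sub, sub_mul, Matrix.mul_smul, Matrix.smul_mul]
  congr 1
  · simp only [← mul_assoc, Units.inv_mul, one_mul]
    simp only [mul_assoc, Units.mul_inv, mul_one]
  · simp only [sq, mul_assoc, hXu.eq]

variable {𝕜 : Type*} [RCLike 𝕜]

theorem IsHermitian.mul_self_add_smul_one_posDef {X : Matrix n n 𝕜} (hX : X.IsHermitian) {ε : ℝ}
    (hε : 0 < ε) : (X * X + ε • 1).PosDef := by
  have hXX : (X * X).PosSemidef := by
    simpa only [hX.eq] using posSemidef_conjTranspose_mul_self X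
  exact (PosDef.one.smul hε).posSemidef_add hXX

theorem commute_mul_self_add_smul_one (X : Matrix n n 𝕜) (ε : ℝ) : Commute X (X * X + ε • 1) :=
  ((Commute.refl X).mul_right (Commute.refl X)).add_right ((Commute.one_right X).smul_right ε)

theorem PosSemidef.mul_mul_sub_smul {X : Matrix n n 𝕜} (hX : X.PosSemidef) {ε c : ℝ} (hε : 0 ≤ ε)
    (hc : c ≤ ε ^ 2) :
    ((X * X + ε • 1) * X * (X * X + ε • 1) - c • X).PosSemidef := by
  have h : (X * X + ε • 1) * X * (X * X + ε • 1) - c • X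
      = X ^ 5 + (2 * ε) • X ^ 3 + (ε ^ 2 - c) • X := by
    simp only [add_mul, mul_add, Matrix.smul_mul, Matrix.mul_smul, one_mul, mul_one, smul_smul,
      pow_succ, pow_zero, mul_assoc]
    module
  rw [h]
  exact ((hX.pow 5).add ((hX.pow 3).smul (by positivity))).add (hX.smul (sub_nonneg.2 hc))

end Matrix

theorem gradient_step_psd_singular_value_relaxation_general
    {n : ℕ} (ε q α : ℝ) (hε : 0 < ε)
    (X : Matrix (Fin n) (Fin n) ℝ) (hX : X.PosSemidef)
    (hα : α ≤ ε / (4 * (1 + ε ^ q))) :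
    Matrix.PosSemidef
      (X - (2 * α) • ((2 * ε * (1 + ε ^ q)) • ((((X * Xᵀ + ε • 1)⁻¹) ^ 2) * X))) := by
  have hc : 2 * α * (2 * ε * (1 + ε ^ q)) ≤ ε ^ 2 := by
    have hpos : 0 < 4 * (1 + ε ^ q) := by positivity
    rw [le_div_iff₀ hpos] at hα
    nlinarith
  have hXt : Xᵀ = X := hX.isHermitian.eq
  set M := X * X + ε • 1
  have hM : M.PosDef := hX.isHermitian.mul_self_add_smul_one_posDef hε
  rw [hXt, smul_smul, sub_smul_inv_sq_mul_eq_inv_mul_mul_inv hM.isUnit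
    (commute_mul_self_add_smul_one X ε)]
  simpa only [hM.isHermitian.inv.eq] using
    (hX.mul_mul_sub_smul hε.le hc).mul_mul_conjTranspose_same M⁻¹

/-- First step of the proof of Theorem 3.1: for `ε > 0`, `q ∈ [0,1]`, a real symmetric
PSD `n×n` matrix `X`, `C = 2ε(1+ε^q)`, and `0 ≤ α ≤ ε / (4(1+ε^q))`, the plain gradient
step `X - 2αC·(XXᵀ + εI)⁻²·X` is positive semidefinite. -/
theorem gradient_step_psd_singular_value_relaxation
    {n : ℕ} (ε q α : ℝ) (hε : 0 < ε) (hq0 : 0 ≤ q) (hq1 : q ≤ 1)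
    (X : Matrix (Fin n) (Fin n) ℝ) (hX : X.PosSemidef)
    (hα0 : 0 ≤ α) (hα : α ≤ ε / (4 * (1 + ε ^ q))) :
    Matrix.PosSemidef
      (X - (2 * α) • ((2 * ε * (1 + ε ^ q)) • ((((X * Xᵀ + ε • 1)⁻¹) ^ 2) * X))) :=
  gradient_step_psd_singular_value_relaxation_general ε q α hε X hX hα
end

section
/- Let ε > 0 and let X be a real symmetric positive semidefinite n×n matrix. Then every diagonal entry of the matrix (XXᵀ + εI)⁻²·X is nonnegative. -/
/-!
Write `A = XXᵀ + εI`. Since `X` is symmetric, `A = X² + εI` commutes with `X`, hence so does the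
symmetric matrix `A⁻¹`. Therefore `A⁻² X = A⁻¹ X A⁻¹ = (A⁻¹)ᵀ X A⁻¹` is positive semidefinite,
and the diagonal of a positive semidefinite matrix is nonnegative.
-/

open Matrix

variable {n : Type*} [Fintype n] [DecidableEq n]

theorem Commute.matrix_nonsing_inv_right {R : Type*} [CommRing R] {X A : Matrix n n R}
    (h : Commute X A) : Commute X A⁻¹ := by
  by_cases hA : IsUnit A.det
  · calc X * A⁻¹ = A⁻¹ * (A * X) * A⁻¹ := by
          rw [← Matrix.mul_assoc, nonsing_inv_mul _ hA, Matrix.one_mul]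
      _ = A⁻¹ * (X * A) * A⁻¹ := by rw [h.eq]
      _ = A⁻¹ * X := by
          rw [Matrix.mul_assoc, Matrix.mul_assoc, mul_nonsing_inv _ hA, Matrix.mul_one]
  · rw [nonsing_inv_apply_not_isUnit A hA]
    exact Commute.zero_right X

theorem Matrix.PosSemidef.sq_mul_of_commute {R : Type*} [Ring R] [PartialOrder R] [StarRing R]
    {X B : Matrix n n R} (hX : X.PosSemidef) (hB : B.IsHermitian) (h : Commute X B) :
    (B ^ 2 * X).PosSemidef := by
  have hsandwich : B ^ 2 * X = Bᴴ * X * B := by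
    rw [hB.eq, sq, Matrix.mul_assoc, Matrix.mul_assoc, h.eq]
  exact hsandwich ▸ hX.conjTranspose_mul_mul_same B

theorem diag_nonneg_singular_value_gradient_general
    {n : ℕ} (ε : ℝ)
    (X : Matrix (Fin n) (Fin n) ℝ) (hX : X.PosSemidef) :
    ∀ i : Fin n, 0 ≤ ((((X * Xᵀ + ε • 1)⁻¹) ^ 2) * X) i i := by
  intro i
  have hXsymm : Xᵀ = X := by simpa using hX.isHermitian.eq
  have hA : (X * Xᵀ + ε • 1).IsHermitian :=
    (isHermitian_mul_conjTranspose_self X).add (isHermitian_one.smul (IsSelfAdjoint.all ε))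
  have hcomm : Commute X (X * Xᵀ + ε • 1) := by
    rw [hXsymm]
    exact ((Commute.refl X).mul_right (Commute.refl X)).add_right
      ((Commute.one_right X).smul_right ε)
  exact (hX.sq_mul_of_commute hA.inv hcomm.matrix_nonsing_inv_right).diag_nonneg

/-- Second step of the proof of Theorem 3.1: for `ε > 0` and a real symmetric PSD
`n×n` matrix `X`, every diagonal entry of `(XXᵀ + εI)⁻²·X` is nonnegative. -/
theorem diag_nonneg_singular_value_gradient
    {n : ℕ} (ε : ℝ) (hε : 0 < ε)
    (X : Matrix (Fin n) (Fin n) ℝ) (hX : X.PosSemidef) :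
    ∀ i : Fin n, 0 ≤ ((((X * Xᵀ + ε • 1)⁻¹) ^ 2) * X) i i :=
  diag_nonneg_singular_value_gradient_general ε X hX
end

section
/- Let ε > 0, 0 < p ≤ 2, and let X be a real symmetric positive semidefinite n×n matrix all of whose diagonal entries equal 1. Set G = p·X·(XᵀX + εI)^{(p−2)/2}. If 0 ≤ α ≤ ε^{(2−p)/2}/(2p), then the matrix Y obtained from X − 2αG by replacing every diagonal entry with 1 is positive semidefinite. -/
open Matrix

/-- The real power of a symmetric matrix, defined spectrally: for a Hermitian matrix
`A` with eigendecomposition `A = U D U*`, `matRpow A r = U D^r U*` (junk value `0` if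
`A` is not Hermitian). -/
noncomputable def matRpow {n : ℕ} (A : Matrix (Fin n) (Fin n) ℝ) (r : ℝ) :
    Matrix (Fin n) (Fin n) ℝ :=
  if hA : A.IsHermitian then
    (hA.eigenvectorUnitary : Matrix (Fin n) (Fin n) ℝ) *
      Matrix.diagonal (fun i => hA.eigenvalues i ^ r) *
      (star (hA.eigenvectorUnitary : Matrix (Fin n) (Fin n) ℝ))
  else 0
/-!
With `r = (p - 2)/2` and `c = 2αp`, both `G = X (XᵀX + εI)^r` and the step `X - c G` are
spectral functions of `X`, namely `x (x² + ε)^r` and `x (1 - c (x² + ε)^r)`. Since `r ≤ 0`,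
`(x² + ε)^r ≤ ε^r` and the step bound gives `c ε^r ≤ 1`, so both functions are nonnegative on
the spectrum of `X`. Resetting the unit diagonal of `X - c G` to `1` adds the nonnegative
diagonal `c Gᵢᵢ`, which preserves positive semidefiniteness.
-/

open scoped MatrixOrder ComplexOrder

section
variable {m 𝕜 : Type*} [DecidableEq m] [RCLike 𝕜]

lemma Matrix.PosSemidef.cfc_of_nonneg [Fintype m] {X : Matrix m m 𝕜} (hX : X.PosSemidef)
    {f : ℝ → ℝ} (hf : ∀ x, 0 ≤ x → 0 ≤ f x) : (cfc f X).PosSemidef :=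
  nonneg_iff_posSemidef.1 <| cfc_nonneg fun x hx => hf x (spectrum_nonneg_of_nonneg hX.nonneg hx)

lemma Matrix.PosSemidef.replaceDiag_of_le {B : Matrix m m 𝕜} (hB : B.PosSemidef) {d : m → 𝕜}
    (hd : ∀ i, B i i ≤ d i) : (of fun i j => if i = j then d i else B i j).PosSemidef := by
  have hsplit : (of fun i j => if i = j then d i else B i j) = B + diagonal (d - B.diag) := by
    ext i j
    by_cases h : i = j
    · subst h; simp
    · simp [h]
  rw [hsplit]
  exact hB.add (PosSemidef.diagonal fun i => sub_nonneg.2 (hd i))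

end

lemma Matrix.IsHermitian.transpose_mul_self_add_smul_one {m : Type*} [Fintype m] [DecidableEq m]
    {X : Matrix m m ℝ} (hX : X.IsHermitian) (ε : ℝ) :
    Xᵀ * X + ε • 1 = cfc (fun x : ℝ => x ^ 2 + ε) X := by
  rw [cfc_add .., cfc_pow_id X 2, cfc_const ε X, Algebra.algebraMap_eq_smul_one, sq,
    ← conjTranspose_eq_transpose_of_trivial, hX.eq]

lemma matRpow_eq_cfc {n : ℕ} {A : Matrix (Fin n) (Fin n) ℝ} (hA : A.IsHermitian) (r : ℝ) :
    matRpow A r = cfc (fun x : ℝ => x ^ r) A := by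
  rw [matRpow, dif_pos hA, hA.cfc_eq, IsHermitian.cfc]
  rfl

lemma continuous_rpow_sq_add {ε : ℝ} (hε : 0 < ε) (r : ℝ) :
    Continuous fun x : ℝ => (x ^ 2 + ε) ^ r :=
  (by fun_prop : Continuous fun x : ℝ => x ^ 2 + ε).rpow_const fun _ => Or.inl (by positivity)

lemma mul_matRpow_transpose_mul_self_add_smul_one {n : ℕ} {X : Matrix (Fin n) (Fin n) ℝ}
    (hX : X.IsHermitian) {ε : ℝ} (hε : 0 < ε) (r : ℝ) :
    X * matRpow (Xᵀ * X + ε • 1) r = cfc (fun x : ℝ => x * (x ^ 2 + ε) ^ r) X := by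
  have hA : (cfc (fun x : ℝ => x ^ 2 + ε) X).IsHermitian := cfc_predicate _ X
  have hrpow : ContinuousOn (· ^ r) ((fun x : ℝ => x ^ 2 + ε) '' spectrum ℝ X) := by
    rintro _ ⟨x, -, rfl⟩
    exact (Real.continuousAt_rpow_const _ r (Or.inl (by positivity))).continuousWithinAt
  rw [hX.transpose_mul_self_add_smul_one, matRpow_eq_cfc hA, ← cfc_comp' _ _ X hrpow,
    cfc_mul (fun x : ℝ => x) _ X (by fun_prop) (continuous_rpow_sq_add hε r).continuousOn,
    cfc_id' ℝ X]

lemma mul_rpow_sq_add_le_one {ε r c : ℝ} (hε : 0 < ε) (hr : r ≤ 0) (hc : c ≤ ε ^ (-r))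
    (x : ℝ) : c * (x ^ 2 + ε) ^ r ≤ 1 :=
  calc c * (x ^ 2 + ε) ^ r ≤ ε ^ (-r) * ε ^ r :=
      mul_le_mul hc (Real.rpow_le_rpow_of_nonpos hε (by nlinarith [sq_nonneg x]) hr)
        (by positivity) (by positivity)
    _ = 1 := by rw [← Real.rpow_add hε, neg_add_cancel, Real.rpow_zero]

/-- **Theorem 3.2** (smoothed Schatten `p`-norm, gradient step with diagonal reset).
Let `ε > 0`, `0 < p ≤ 2`, and let `X` be a real symmetric PSD `n×n` matrix with unit
diagonal.  Set `G = p • X * (XᵀX + εI)^((p-2)/2)`.  If `0 ≤ α ≤ ε^((2-p)/2) / (2p)`,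
then the matrix obtained from `X - 2αG` by resetting every diagonal entry to `1` is
positive semidefinite. -/
theorem gradient_step_diag_reset_psd_schatten
    {n : ℕ} (ε p α : ℝ) (hε : 0 < ε) (hp0 : 0 < p) (hp2 : p ≤ 2)
    (X : Matrix (Fin n) (Fin n) ℝ) (hX : X.PosSemidef)
    (hdiag : ∀ i, X i i = 1)
    (hα0 : 0 ≤ α) (hα : α ≤ ε ^ ((2 - p) / 2) / (2 * p)) :
    Matrix.PosSemidef (Matrix.of fun i j : Fin n =>
      if i = j then (1 : ℝ)
      else ((X - (2 * α) • (p • (X * matRpow (Xᵀ * X + ε • 1) ((p - 2) / 2)))) :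
        Matrix (Fin n) (Fin n) ℝ) i j) := by
  set r := (p - 2) / 2 with hr
  set G := X * matRpow (Xᵀ * X + ε • 1) r
  set c := 2 * α * p
  have hG : G = cfc (fun x : ℝ => x * (x ^ 2 + ε) ^ r) X :=
    mul_matRpow_transpose_mul_self_add_smul_one hX.isHermitian hε r
  have hc : c ≤ ε ^ (-r) :=
    calc c = 2 * p * α := by ring
      _ ≤ 2 * p * (ε ^ ((2 - p) / 2) / (2 * p)) := by gcongr
      _ = ε ^ (-r) := by rw [show -r = (2 - p) / 2 by ring]; field_simp
  have hstep : X - (2 * α) • (p • G) = cfc (fun x : ℝ => x - c * (x * (x ^ 2 + ε) ^ r)) X := by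
    have hcont := (continuous_rpow_sq_add hε r).continuousOn (s := spectrum ℝ X)
    rw [cfc_sub _ _ X (by fun_prop) (by fun_prop), cfc_const_mul _ _ X (by fun_prop),
      cfc_id' ℝ X, ← hG, smul_smul]
  have hG_psd : G.PosSemidef := hG ▸ hX.cfc_of_nonneg fun x hx => by positivity
  have hstep_psd : (X - (2 * α) • (p • G)).PosSemidef := hstep ▸ hX.cfc_of_nonneg fun x hx => by
    have := mul_rpow_sq_add_le_one hε (by rw [hr]; linarith) hc x
    nlinarith
  refine hstep_psd.replaceDiag_of_le (d := fun _ => 1) fun i => ?_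
  have hGii := hG_psd.diag_nonneg (i := i)
  simp only [Matrix.sub_apply, Matrix.smul_apply, smul_eq_mul, hdiag]
  linarith [mul_nonneg (mul_nonneg hα0 hp0.le) hGii]
end

section
/- Consider the SDP: minimize Σ_{i∈I} f_i(tr(X·S_i)) over real symmetric positive semidefinite n×n matrices X subject to g_j(tr(X·C_j)) ≤ 0 for all j∈J, where I, J are finite index sets, each f_i : ℝ → ℝ and g_j : ℝ → ℝ is convex, and S_i, C_j are real n×n matrices. Suppose X* is a global minimizer of this SDP with rank(X*) = r and X* = V*·V*ᵀ for some V* ∈ ℝ^{n×r}. Let Ṽ ∈ ℝ^{n×q'} satisfy g_j(tr(Ṽᵀ·C_j·Ṽ)) ≤ 0 for all j∈J. Let R : ℝ^{n×(q'+r+1)} → ℝ be a function with R(V) ≥ 0 for all V and R(V) = 0 whenever rank(V) < q'+r+1. If the matrix V̂ = [Ṽ | 0_{n×(r+1)}] ∈ ℝ^{n×(q'+r+1)} (Ṽ padded with r+1 zero columns) is a local minimum of the function V ↦ Σ_{i∈I} f_i(tr(Vᵀ·S_i·V)) + R(V) restricted to the feasible set {V ∈ ℝ^{n×(q'+r+1)}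 : g_j(tr(Vᵀ·C_j·V)) ≤ 0 for all j∈J}, then Ṽ·Ṽᵀ is a global minimizer of the SDP, i.e., Σ_{i∈I} f_i(tr(Ṽ·Ṽᵀ·S_i)) = Σ_{i∈I} f_i(tr(X*·S_i)). -/
open Matrix

open Topology Filter


private lemma myTrace {n p : ℕ} (V : Matrix (Fin n) (Fin p) ℝ) (M : Matrix (Fin n) (Fin n) ℝ) :
    (Vᵀ * M * V).trace = (V * Vᵀ * M).trace := by
  rw [Matrix.trace_mul_comm, ← Matrix.mul_assoc]

private lemma mul_transpose_eq {n q r : ℕ} (A : Matrix (Fin n) (Fin q) ℝ)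
    (B : Matrix (Fin n) (Fin r) ℝ) (s t : ℝ)
    (W : Matrix (Fin n) (Fin (q + r + 1)) ℝ)
    (hW : ∀ a b, W a b = if hb : (b : ℕ) < q then s * A a ⟨b, hb⟩
      else if hb2 : (b : ℕ) - q < r then t * B a ⟨(b : ℕ) - q, hb2⟩ else 0) :
    W * Wᵀ = (s * s) • (A * Aᵀ) + (t * t) • (B * Bᵀ) := by
  ext a c
  simp only [Matrix.mul_apply, Matrix.transpose_apply, Matrix.add_apply, Matrix.smul_apply,
    smul_eq_mul]
  rw [Fin.sum_univ_add (f := fun b : Fin ((q + r) + 1) => W a b * W c b)]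
  rw [Fin.sum_univ_add (f := fun b : Fin (q + r) =>
    W a (Fin.castAdd 1 b) * W c (Fin.castAdd 1 b))]
  have h1 : ∀ b : Fin q, W a (Fin.castAdd 1 (Fin.castAdd r b)) *
      W c (Fin.castAdd 1 (Fin.castAdd r b)) = s * s * (A a b * A c b) := by
    intro b
    rw [hW, hW]
    rw [dif_pos (show ((Fin.castAdd 1 (Fin.castAdd r b) : Fin (q+r+1)) : ℕ) < q from b.isLt),
        dif_pos (show ((Fin.castAdd 1 (Fin.castAdd r b) : Fin (q+r+1)) : ℕ) < q from b.isLt)]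
    simp only [Fin.coe_castAdd, Fin.eta]
    ring
  have h2 : ∀ b : Fin r, W a (Fin.castAdd 1 (Fin.natAdd q b)) *
      W c (Fin.castAdd 1 (Fin.natAdd q b)) = t * t * (B a b * B c b) := by
    intro b
    have hv : ((Fin.castAdd 1 (Fin.natAdd q b) : Fin (q+r+1)) : ℕ) = q + (b : ℕ) := rfl
    have hB : ∀ x, W x (Fin.castAdd 1 (Fin.natAdd q b)) = t * B x b := by
      intro x
      rw [hW, dif_neg (by omega), dif_pos (by omega)]
      congr 1
      apply congrArg (B x)
      apply Fin.ext
      simp only [Fin.val_mk, hv]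
      omega
    rw [hB, hB]; ring
  have h3 : ∀ b : Fin 1, W a (Fin.natAdd (q + r) b) * W c (Fin.natAdd (q + r) b) = 0 := by
    intro b
    have hb1 : (b : ℕ) < 1 := b.isLt
    have hv : ((Fin.natAdd (q + r) b : Fin (q+r+1)) : ℕ) = q + r + (b : ℕ) := rfl
    rw [hW, dif_neg (by omega), dif_neg (by omega)]
    ring
  rw [Finset.sum_congr rfl (fun b _ => h1 b), Finset.sum_congr rfl (fun b _ => h2 b),
      Finset.sum_congr rfl (fun b _ => h3 b)]
  simp [Finset.mul_sum]

private lemma rank_helper {n q r : ℕ} (W : Matrix (Fin n) (Fin (q + r + 1)) ℝ)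
    (h : ∀ (a : Fin n) (b : Fin (q + r + 1)), (b : ℕ) = q + r → W a b = 0) :
    W.rank < q + r + 1 := by
  classical
  set w : Fin (q + r + 1) → ℝ := fun b => if (b : ℕ) < q + r then 1 else 0 with hw
  have hWd : W = W * Matrix.diagonal w := by
    ext a b
    rw [Matrix.mul_diagonal]
    by_cases hb : (b : ℕ) < q + r
    · simp [w, hb]
    · have hbe : (b : ℕ) = q + r := by have := b.isLt; omega
      rw [h a b hbe]; ring
  have hcard : Fintype.card {i // w i ≠ 0} ≤ q + r := by
    have hlt : ∀ b : {i : Fin (q + r + 1) // w i ≠ 0}, ((b : Fin (q+r+1)) : ℕ) < q + r := by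
      intro b
      by_contra hc
      exact b.2 (by simp [w, hc])
    calc Fintype.card {i // w i ≠ 0}
        ≤ Fintype.card (Fin (q + r)) := Fintype.card_le_of_injective
          (fun b => ⟨(b : Fin (q+r+1)) , hlt b⟩)
          (by intro x y hxy
              simp only [Fin.mk.injEq] at hxy
              exact Subtype.ext (Fin.ext hxy))
      _ = q + r := Fintype.card_fin _
  calc W.rank = (W * Matrix.diagonal w).rank := by rw [← hWd]
    _ ≤ (Matrix.diagonal w).rank := Matrix.rank_mul_le_right _ _
    _ = Fintype.card {i // w i ≠ 0} := Matrix.rank_diagonal w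
    _ ≤ q + r := hcard
    _ < q + r + 1 := by omega
/-- **Theorem 4.2** (exact recovery for strict penalty functions).  Consider the SDP
`min Σᵢ fᵢ(tr(X Sᵢ))` over PSD matrices `X` subject to `gⱼ(tr(X Cⱼ)) ≤ 0`, with all
`fᵢ, gⱼ : ℝ → ℝ` convex.  Let `X*` be a global minimizer of rank `r`, factored as
`X* = V* V*ᵀ` with `V* ∈ ℝ^{n×r}`.  Let `Ṽ ∈ ℝ^{n×q'}` be feasible, and let
`R : ℝ^{n×(q'+r+1)} → ℝ` be a nonnegative penalty vanishing on matrices of rank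
`< q'+r+1`.  If `V̂ = [Ṽ | 0_{n×(r+1)}]` is a local minimum of
`V ↦ Σᵢ fᵢ(tr(Vᵀ Sᵢ V)) + R(V)` on the feasible set
`{V : ∀ j, gⱼ(tr(Vᵀ Cⱼ V)) ≤ 0}`, then `Ṽ Ṽᵀ` is a global minimizer of the SDP. -/
theorem strict_penalty_exact_recovery
    {n r q' : ℕ} {ι κ : Type} [Fintype ι] [Fintype κ]
    (f : ι → ℝ → ℝ) (g : κ → ℝ → ℝ)
    (hf : ∀ i, ConvexOn ℝ Set.univ (f i)) (hg : ∀ j, ConvexOn ℝ Set.univ (g j))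
    (S : ι → Matrix (Fin n) (Fin n) ℝ) (C : κ → Matrix (Fin n) (Fin n) ℝ)
    (Xstar : Matrix (Fin n) (Fin n) ℝ) (hXpsd : Xstar.PosSemidef)
    (hXfeas : ∀ j, g j ((Xstar * C j).trace) ≤ 0)
    (hXopt : ∀ X : Matrix (Fin n) (Fin n) ℝ, X.PosSemidef →
      (∀ j, g j ((X * C j).trace) ≤ 0) →
      ∑ i, f i ((Xstar * S i).trace) ≤ ∑ i, f i ((X * S i).trace))
    (hrank : Xstar.rank = r)
    (Vstar : Matrix (Fin n) (Fin r) ℝ) (hfact : Xstar = Vstar * Vstarᵀ)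
    (Vtil : Matrix (Fin n) (Fin q') ℝ)
    (hVfeas : ∀ j, g j ((Vtilᵀ * C j * Vtil).trace) ≤ 0)
    (R : Matrix (Fin n) (Fin (q' + r + 1)) ℝ → ℝ)
    (hR0 : ∀ V, 0 ≤ R V)
    (hRstrict : ∀ V : Matrix (Fin n) (Fin (q' + r + 1)) ℝ,
      V.rank < q' + r + 1 → R V = 0)
    (Vhat : Matrix (Fin n) (Fin (q' + r + 1)) ℝ)
    (hVhat : ∀ (a : Fin n) (b : Fin (q' + r + 1)),
      Vhat a b = if hb : (b : ℕ) < q' then Vtil a ⟨b, hb⟩ else 0)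
    (hloc : IsLocalMinOn
      (fun V : Matrix (Fin n) (Fin (q' + r + 1)) ℝ =>
        ∑ i, f i ((Vᵀ * S i * V).trace) + R V)
      {V : Matrix (Fin n) (Fin (q' + r + 1)) ℝ |
        ∀ j, g j ((Vᵀ * C j * V).trace) ≤ 0}
      Vhat) :
    ∑ i, f i ((Vtil * Vtilᵀ * S i).trace) = ∑ i, f i ((Xstar * S i).trace) := by
  classical
  -- the path of factor matrices
  set W : ℝ → Matrix (Fin n) (Fin (q' + r + 1)) ℝ := fun t =>
    Matrix.of fun a b => if hb : (b : ℕ) < q' then Real.sqrt (1 - t) * Vtil a ⟨b, hb⟩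
      else if hb2 : (b : ℕ) - q' < r then Real.sqrt t * Vstar a ⟨(b : ℕ) - q', hb2⟩ else 0
    with hWdef
  have hWmul : ∀ t ∈ Set.Icc (0:ℝ) 1,
      W t * (W t)ᵀ = (1 - t) • (Vtil * Vtilᵀ) + t • Xstar := by
    intro t ht
    rw [hfact]
    rw [mul_transpose_eq Vtil Vstar (Real.sqrt (1 - t)) (Real.sqrt t) (W t)
      (fun a b => rfl), Real.mul_self_sqrt (by linarith [ht.2]), Real.mul_self_sqrt ht.1]
  have hW0 : W 0 = Vhat := by
    ext a b
    rw [hVhat]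
    show (if hb : (b : ℕ) < q' then Real.sqrt (1 - 0) * Vtil a ⟨b, hb⟩
      else if hb2 : (b : ℕ) - q' < r then Real.sqrt 0 * Vstar a ⟨(b : ℕ) - q', hb2⟩ else 0) = _
    split_ifs <;> simp
  -- rank of W t is deficient, so the penalty vanishes
  have hRW : ∀ t, R (W t) = 0 := by
    intro t
    refine hRstrict _ (rank_helper _ ?_)
    intro a b hb
    show (if hb : (b : ℕ) < q' then Real.sqrt (1 - t) * Vtil a ⟨b, hb⟩
      else if hb2 : (b : ℕ) - q' < r then Real.sqrt t * Vstar a ⟨(b : ℕ) - q', hb2⟩ else 0) = 0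
    rw [dif_neg (by omega), dif_neg (by omega)]
  -- feasibility of W t for t ∈ [0,1]
  have htr : ∀ t ∈ Set.Icc (0:ℝ) 1, ∀ M : Matrix (Fin n) (Fin n) ℝ,
      ((W t)ᵀ * M * W t).trace
        = (1 - t) * (Vtil * Vtilᵀ * M).trace + t * (Xstar * M).trace := by
    intro t ht M
    rw [myTrace, hWmul t ht, Matrix.add_mul, Matrix.smul_mul, Matrix.smul_mul,
      Matrix.trace_add, Matrix.trace_smul, Matrix.trace_smul, smul_eq_mul, smul_eq_mul]
  have hfeasW : ∀ t ∈ Set.Icc (0:ℝ) 1,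
      W t ∈ {V : Matrix (Fin n) (Fin (q' + r + 1)) ℝ |
        ∀ j, g j ((Vᵀ * C j * V).trace) ≤ 0} := by
    intro t ht j
    rw [htr t ht]
    have hcv := (hg j).2 (Set.mem_univ ((Vtil * Vtilᵀ * C j).trace))
      (Set.mem_univ ((Xstar * C j).trace)) (by linarith [ht.2] : (0:ℝ) ≤ 1 - t) ht.1
      (by ring)
    simp only [smul_eq_mul] at hcv
    have h1 : g j ((Vtil * Vtilᵀ * C j).trace) ≤ 0 := by
      rw [← myTrace]; exact hVfeas j
    nlinarith [ht.1, ht.2, h1, hXfeas j]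
  -- continuity of the path
  have hWc : Continuous W := by
    apply continuous_pi; intro a; apply continuous_pi; intro b
    by_cases hb : (b : ℕ) < q'
    · have : (fun t => W t a b) = fun t => Real.sqrt (1 - t) * Vtil a ⟨b, hb⟩ := by
        funext t; exact dif_pos hb
      rw [this]
      exact (Real.continuous_sqrt.comp (continuous_const.sub continuous_id)).mul
        continuous_const
    · by_cases hb2 : (b : ℕ) - q' < r
      · have : (fun t => W t a b) = fun t => Real.sqrt t * Vstar a ⟨(b : ℕ) - q', hb2⟩ := by
          funext t; rw [show W t a b = _ from dif_neg hb, dif_pos hb2]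
        rw [this]
        exact Real.continuous_sqrt.mul continuous_const
      · have : (fun t => W t a b) = fun _ => (0:ℝ) := by
          funext t; rw [show W t a b = _ from dif_neg hb, dif_neg hb2]
        rw [this]; exact continuous_const
  -- pull the local-minimality back along the path
  have hne : (𝓝[Set.Ioc (0:ℝ) 1] (0:ℝ)).NeBot := left_nhdsWithin_Ioc_neBot zero_lt_one
  have hT : Filter.Tendsto W (𝓝[Set.Ioc (0:ℝ) 1] 0)
      (𝓝[{V : Matrix (Fin n) (Fin (q' + r + 1)) ℝ |
        ∀ j, g j ((Vᵀ * C j * V).trace) ≤ 0}] Vhat) := by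
    rw [tendsto_nhdsWithin_iff]
    constructor
    · have h0 : Filter.Tendsto W (𝓝[Set.Ioc (0:ℝ) 1] 0) (𝓝 (W 0)) :=
        (hWc.tendsto 0).mono_left nhdsWithin_le_nhds
      rwa [hW0] at h0
    · exact Filter.eventually_of_mem self_mem_nhdsWithin
        (fun t ht => hfeasW t ⟨le_of_lt ht.1, ht.2⟩)
  have hev : ∀ᶠ t in 𝓝[Set.Ioc (0:ℝ) 1] (0:ℝ),
      (∑ i, f i ((Vhatᵀ * S i * Vhat).trace) + R Vhat)
        ≤ ∑ i, f i (((W t)ᵀ * S i * W t).trace) + R (W t) := hT.eventually hloc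
  obtain ⟨t0, hineq, ht0⟩ := (hev.and eventually_mem_nhdsWithin).exists
  have ht01 : t0 ∈ Set.Icc (0:ℝ) 1 := ⟨le_of_lt ht0.1, ht0.2⟩
  have hY : Vhat * Vhatᵀ = Vtil * Vtilᵀ := by
    rw [← hW0, hWmul 0 ⟨le_refl 0, zero_le_one⟩]
    simp
  have e1 : ∀ i, (Vhatᵀ * S i * Vhat).trace = (Vtil * Vtilᵀ * S i).trace := by
    intro i; rw [myTrace, hY]
  have e2 : ∀ i, ((W t0)ᵀ * S i * W t0).trace
      = (1 - t0) * (Vtil * Vtilᵀ * S i).trace + t0 * (Xstar * S i).trace :=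
    fun i => htr t0 ht01 (S i)
  have hRhat : R Vhat = 0 := by rw [← hW0]; exact hRW 0
  rw [Finset.sum_congr rfl (fun i _ => congrArg (f i) (e1 i)),
      Finset.sum_congr rfl (fun i _ => congrArg (f i) (e2 i)), hRW t0, hRhat] at hineq
  have hcvx : ∑ i, f i ((1 - t0) * (Vtil * Vtilᵀ * S i).trace + t0 * (Xstar * S i).trace)
      ≤ (1 - t0) * ∑ i, f i ((Vtil * Vtilᵀ * S i).trace)
        + t0 * ∑ i, f i ((Xstar * S i).trace) := by
    rw [Finset.mul_sum, Finset.mul_sum, ← Finset.sum_add_distrib]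
    refine Finset.sum_le_sum fun i _ => ?_
    have := (hf i).2 (Set.mem_univ ((Vtil * Vtilᵀ * S i).trace))
      (Set.mem_univ ((Xstar * S i).trace)) (by linarith [ht01.2] : (0:ℝ) ≤ 1 - t0)
      ht01.1 (by ring)
    simpa using this
  have hpsd : (Vtil * Vtilᵀ).PosSemidef := by
    have := Matrix.posSemidef_self_mul_conjTranspose Vtil
    rwa [Matrix.conjTranspose_eq_transpose_of_trivial] at this
  have hfe : ∀ j, g j ((Vtil * Vtilᵀ * C j).trace) ≤ 0 := fun j => by
    rw [← myTrace]; exact hVfeas j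
  have hopt := hXopt _ hpsd hfe
  have ht0pos : 0 < t0 := ht0.1
  nlinarith [hineq, hcvx, hopt]
end

section
/- Let ε > 0 and q ∈ [0,1], and define Φ(X) = (1+ε^q)·tr(Xᵀ(XXᵀ + εI)⁻¹X) for real n×n matrices X. Then for every real symmetric n×n matrix X and every real symmetric n×n direction H, the derivative at t = 0 of the function t ↦ Φ(X + tH) equals tr(Hᵀ·G), where G = 2ε(1+ε^q)·(XXᵀ + εI)⁻²·X; i.e., on symmetric matrices the gradient of Φ with respect to the Frobenius inner product is 2ε(1+ε^q)(XXᵀ + εI)⁻²X. -/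
/-!
Since `Xᵀ(XXᵀ + εI)⁻¹X` and `(XXᵀ + εI)⁻¹XXᵀ` have the same trace, and
`(XXᵀ + εI)⁻¹XXᵀ = I - ε(XXᵀ + εI)⁻¹`, the surrogate is `Φ(X) = (1 + ε^q)(n - ε tr B⁻¹)` with
`B = XXᵀ + εI`. Along `X + tH` the derivative of `B` is `HXᵀ + XHᵀ`, so that of `tr B⁻¹` is
`-tr(B⁻¹(HXᵀ + XHᵀ)B⁻¹)`; cyclicity of the trace and the symmetry of `B⁻¹` turn this into
`-2 tr(Hᵀ B⁻² X)`.
-/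

open Matrix

attribute [local instance] Matrix.linftyOpNormedRing Matrix.linftyOpNormedAlgebra

namespace Matrix

variable {ι : Type*} [Fintype ι] [DecidableEq ι]

theorem posDef_mul_transpose_add_smul_one (A : Matrix ι ι ℝ) {ε : ℝ} (hε : 0 < ε) :
    (A * Aᵀ + ε • 1).PosDef := by
  have hAA := posSemidef_self_mul_conjTranspose A
  rw [conjTranspose_eq_transpose_of_trivial] at hAA
  exact PosDef.posSemidef_add hAA (PosDef.one.smul hε)

theorem trace_transpose_mul_inv_mul (A : Matrix ι ι ℝ) {ε : ℝ} (hε : 0 < ε) :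
    (Aᵀ * (A * Aᵀ + ε • 1)⁻¹ * A).trace =
      Fintype.card ι - ε * ((A * Aᵀ + ε • 1)⁻¹).trace := by
  set B := A * Aᵀ + ε • 1 with hB
  have hdet : IsUnit B.det :=
    (isUnit_iff_isUnit_det _).mp (posDef_mul_transpose_add_smul_one A hε).isUnit
  have hAA : A * Aᵀ = B - ε • 1 := by rw [hB, add_sub_cancel_right]
  rw [trace_mul_cycle, hAA, sub_mul, mul_nonsing_inv _ hdet, trace_sub, trace_one,
    smul_mul_assoc, Matrix.one_mul, trace_smul, smul_eq_mul]

theorem IsSymm.trace_mul_add_transpose_mul {R : Type*} [CommSemiring R] {M : Matrix ι ι R}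
    (hM : M.IsSymm) (K : Matrix ι ι R) : (M * (Kᵀ + K) * M).trace = 2 * (M ^ 2 * K).trace := by
  have hKT : (M * Kᵀ * M).trace = (M * K * M).trace := by
    rw [← trace_transpose, transpose_mul, transpose_mul, transpose_transpose, hM.eq,
      Matrix.mul_assoc]
  rw [mul_add, add_mul, trace_add, hKT, ← two_mul, trace_mul_comm, ← Matrix.mul_assoc, sq]

section Calculus

variable {𝕜 : Type*} [RCLike 𝕜]

theorem hasDerivAt_trace {B : 𝕜 → Matrix ι ι 𝕜} {B' : Matrix ι ι 𝕜} {t : 𝕜}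
    (hB : HasDerivAt B B' t) : HasDerivAt (fun s => (B s).trace) B'.trace t :=
  (traceLinearMap ι 𝕜 𝕜).toContinuousLinearMap.hasFDerivAt.comp_hasDerivAt t hB

theorem hasDerivAt_nonsing_inv {B : 𝕜 → Matrix ι ι 𝕜} {B' : Matrix ι ι 𝕜} {t : 𝕜}
    (hB : HasDerivAt B B' t) (hdet : IsUnit (B t).det) :
    HasDerivAt (fun s => (B s)⁻¹) (-((B t)⁻¹ * B' * (B t)⁻¹)) t := by
  obtain ⟨u, hu⟩ := (isUnit_iff_isUnit_det _).mpr hdet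
  have hinv : (↑u⁻¹ : Matrix ι ι 𝕜) = (B t)⁻¹ := by
    rw [nonsing_inv_eq_ringInverse, ← hu, Ring.inverse_unit]
  have h := (hu ▸ hasFDerivAt_ringInverse (𝕜 := 𝕜) u).comp_hasDerivAt t hB
  simp only [hinv, Function.comp_def, ← nonsing_inv_eq_ringInverse] at h
  exact h

theorem hasDerivAt_add_smul_mul_transpose (X H : Matrix ι ι 𝕜) :
    HasDerivAt (fun t : 𝕜 => (X + t • H) * (X + t • H)ᵀ) (H * Xᵀ + X * Hᵀ) 0 := by
  have hline : ∀ X H : Matrix ι ι 𝕜, HasDerivAt (fun t : 𝕜 => X + t • H) H 0 := fun X H => by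
    have h := ((hasDerivAt_id (0 : 𝕜)).smul_const H).const_add X
    simp only [id_eq, one_smul] at h
    exact h
  have h := (hline X H).mul (hline Xᵀ Hᵀ)
  simp only [zero_smul, add_zero, ← transpose_smul, ← transpose_add] at h
  exact h

end Calculus

end Matrix

theorem singular_value_relaxation_gradient_general
    {n : ℕ} (ε q : ℝ) (hε : 0 < ε)
    (X H : Matrix (Fin n) (Fin n) ℝ) :
    HasDerivAt
      (fun t : ℝ => (1 + ε ^ q) *
        ((X + t • H)ᵀ * ((X + t • H) * (X + t • H)ᵀ + ε • 1)⁻¹ * (X + t • H)).trace)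
      ((Hᵀ * ((2 * ε * (1 + ε ^ q)) • ((((X * Xᵀ + ε • 1)⁻¹) ^ 2) * X))).trace)
      0 := by
  have hB := (hasDerivAt_add_smul_mul_transpose X H).add_const
    (ε • 1 : Matrix (Fin n) (Fin n) ℝ)
  have hdet : IsUnit (X * Xᵀ + ε • 1).det :=
    (isUnit_iff_isUnit_det _).mp (posDef_mul_transpose_add_smul_one X hε).isUnit
  have hinv := hasDerivAt_nonsing_inv hB (by simpa using hdet)
  have hΦ := (((hasDerivAt_trace hinv).const_mul ε).const_sub (n : ℝ)).const_mul (1 + ε ^ q)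
  simp only [trace_transpose_mul_inv_mul _ hε, Fintype.card_fin]
  refine hΦ.congr_deriv ?_
  have hsymm : (X * Xᵀ + ε • 1)⁻¹.IsSymm := by
    rw [IsSymm, transpose_nonsing_inv, ((isSymm_mul_transpose_self X).add (isSymm_one.smul ε)).eq]
  have hHX : H * Xᵀ = (X * Hᵀ)ᵀ := by rw [transpose_mul, transpose_transpose]
  simp only [zero_smul, add_zero]
  rw [hHX, trace_neg, hsymm.trace_mul_add_transpose_mul, mul_smul_comm, trace_smul,
    trace_mul_comm Hᵀ, Matrix.mul_assoc, smul_eq_mul]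
  ring

/-- The gradient formula for the singular-value rank surrogate
`Φ(X) = (1+ε^q)·tr(Xᵀ(XXᵀ + εI)⁻¹X)`: on symmetric matrices, the directional
derivative of `Φ` at `X` in a symmetric direction `H` equals `tr(Hᵀ G)` where
`G = 2ε(1+ε^q)·(XXᵀ + εI)⁻²·X`; i.e., `G` is the gradient of `Φ` with respect to the
Frobenius inner product. -/
theorem singular_value_relaxation_gradient
    {n : ℕ} (ε q : ℝ) (hε : 0 < ε) (hq0 : 0 ≤ q) (hq1 : q ≤ 1)
    (X H : Matrix (Fin n) (Fin n) ℝ) (hX : X.IsHermitian) (hH : H.IsHermitian) :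
    HasDerivAt
      (fun t : ℝ => (1 + ε ^ q) *
        ((X + t • H)ᵀ * ((X + t • H) * (X + t • H)ᵀ + ε • 1)⁻¹ * (X + t • H)).trace)
      ((Hᵀ * ((2 * ε * (1 + ε ^ q)) • ((((X * Xᵀ + ε • 1)⁻¹) ^ 2) * X))).trace)
      0 :=
  singular_value_relaxation_gradient_general ε q hε X H
end
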